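/- arXiv:1603.02705 — 2 statements merged into one kernel-verified Lean document; each statement's English description precedes it below -/
import Mathlib

section
/- Let f : ({0,1}^n) → {0,1} be a monotone Boolean function with f(1,…,1) = 1, and fix coordinate i. Then the causal effect E[f | x_i = 1] − E[f | x_i = 0] (under the uniform distribution) is strictly positive if and only if there exists an assignment σ with σ_i = 1, f(σ) = 1, and f(σ with coordinate i flipped to 0) = 0. -/
open Finset

noncomputable def bval (b : Bool) : ℝ := if b then 1 else 0

noncomputable def cexp {n : ℕ} (f : (Fin n → Bool) → ℝ) (i : Fin n) (v : Bool) : ℝ :=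
  (∑ σ ∈ Finset.univ.filter (fun σ : Fin n → Bool => σ i = v), f σ) / 2 ^ (n - 1)

/-- Causal effect of coordinate `i` on `f` under the uniform distribution:
`E[f | x_i = 1] - E[f | x_i = 0]`. -/
noncomputable def effect {n : ℕ} (f : (Fin n → Bool) → ℝ) (i : Fin n) : ℝ :=
  cexp f i true - cexp f i false

noncomputable def mean {n : ℕ} (f : (Fin n → Bool) → ℝ) : ℝ :=
  (∑ σ : Fin n → Bool, f σ) / 2 ^ n

noncomputable def cov {n : ℕ} (f g : (Fin n → Bool) → ℝ) : ℝ :=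
  mean (fun σ => f σ * g σ) - mean f * mean g

noncomputable def variance {n : ℕ} (f : (Fin n → Bool) → ℝ) : ℝ := cov f f

noncomputable def sd {n : ℕ} (f : (Fin n → Bool) → ℝ) : ℝ := Real.sqrt (variance f)

noncomputable def Xi {n : ℕ} (i : Fin n) : (Fin n → Bool) → ℝ := fun σ => bval (σ i)

noncomputable def pearson {n : ℕ} (f g : (Fin n → Bool) → ℝ) : ℝ := cov f g / (sd f * sd g)

theorem stmt_1 {n : ℕ} (f : (Fin n → Bool) → Bool) (i : Fin n)
    (hmono : ∀ x y : Fin n → Bool, (∀ j, x j ≤ y j) → f x ≤ f y)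
    (htop : f (fun _ => true) = true) :
    0 < effect (fun σ => bval (f σ)) i ↔
      ∃ σ : Fin n → Bool, σ i = true ∧ f σ = true ∧
        f (Function.update σ i false) = false := by
  classical
  set S := Finset.univ.filter (fun σ : Fin n → Bool => σ i = true) with hS
  -- rewrite the false-sum as a sum over S via the bijection update
  have hB : (∑ σ ∈ Finset.univ.filter (fun σ : Fin n → Bool => σ i = false), bval (f σ))
      = ∑ σ ∈ S, bval (f (Function.update σ i false)) := by
    refine Finset.sum_nbij' (fun σ => Function.update σ i true)
      (fun σ => Function.update σ i false) ?_ ?_ ?_ ?_ ?_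
    · intro a ha
      simp [hS, Function.update_self]
    · intro a ha
      simp [Function.update_self]
    · intro a ha
      simp only [Finset.mem_filter, Finset.mem_univ, true_and] at ha
      funext j
      by_cases hj : j = i
      · subst hj; simp [Function.update_self, ha]
      · simp [Function.update_of_ne hj]
    · intro a ha
      simp only [hS, Finset.mem_filter, Finset.mem_univ, true_and] at ha
      funext j
      by_cases hj : j = i
      · subst hj; simp [Function.update_self, ha]
      · simp [Function.update_of_ne hj]
    · intro a ha
      congr 1
      simp only [Finset.mem_filter, Finset.mem_univ, true_and] at ha
      congr 1
      funext j
      by_cases hj : j = i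
      · subst hj; simp [Function.update_self, ha]
      · simp [Function.update_of_ne hj]
  have hd : (0:ℝ) < 2 ^ (n - 1) := by positivity
  have heff : effect (fun σ => bval (f σ)) i
      = (∑ σ ∈ S, (bval (f σ) - bval (f (Function.update σ i false)))) / 2 ^ (n - 1) := by
    unfold effect cexp
    rw [hB, div_sub_div_same, ← Finset.sum_sub_distrib]
  -- termwise nonnegativity
  have hterm : ∀ σ ∈ S, 0 ≤ bval (f σ) - bval (f (Function.update σ i false)) := by
    intro σ hσ
    have hle : f (Function.update σ i false) ≤ f σ := by
      apply hmono
      intro j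
      by_cases hj : j = i
      · subst hj; simp [Function.update_self]
      · simp [Function.update_of_ne hj]
    have key : ∀ a b : Bool, a ≤ b → bval a ≤ bval b := by
      intro a b h
      cases a <;> cases b <;>
        first
          | exact absurd h (by decide)
          | (simp [bval]; norm_num)
          | simp [bval]
    have : bval (f (Function.update σ i false)) ≤ bval (f σ) := key _ _ hle
    linarith
  have hpos : ∀ σ, (0 < bval (f σ) - bval (f (Function.update σ i false)))
      ↔ (f σ = true ∧ f (Function.update σ i false) = false) := by
    intro σ
    cases h1 : f (Function.update σ i false) <;> cases h2 : f σ <;>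
      simp [bval, h1, h2] <;> norm_num
  rw [heff]
  constructor
  · intro h
    have hsum : 0 < ∑ σ ∈ S, (bval (f σ) - bval (f (Function.update σ i false))) := by
      by_contra hc
      push_neg at hc
      have := div_nonpos_of_nonpos_of_nonneg hc (le_of_lt hd)
      linarith
    obtain ⟨σ, hσS, hne⟩ := Finset.exists_ne_zero_of_sum_ne_zero (ne_of_gt hsum)
    have hσp : 0 < bval (f σ) - bval (f (Function.update σ i false)) :=
      lt_of_le_of_ne (hterm σ hσS) (Ne.symm hne)
    have hσi : σ i = true := by
      simpa [hS] using hσS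
    exact ⟨σ, hσi, ((hpos σ).mp hσp).1, ((hpos σ).mp hσp).2⟩
  · rintro ⟨σ, hσi, h1, h2⟩
    apply div_pos _ hd
    apply Finset.sum_pos' hterm
    refine ⟨σ, by simp [hS, hσi], ?_⟩
    exact (hpos σ).mpr ⟨h1, h2⟩
end

section
/- For Boolean functions f, g : ({0,1}^n) → {0,1} on disjoint sets of essential variables with f ≤ f ∨ g pointwise, the causal effect of any coordinate i (essential only for f) on f ∨ g equals P[g = 0] times the causal effect of i on f, under the uniform distribution. -/
open Finset

lemma card_half {n : ℕ} (i : Fin n) (v : Bool) :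
    (Finset.univ.filter (fun σ : Fin n → Bool => σ i = v)).card = 2 ^ (n - 1) := by
  classical
  have hswap : ∀ w : Bool,
      (Finset.univ.filter (fun σ : Fin n → Bool => σ i = w)).card
        = (Finset.univ.filter (fun σ : Fin n → Bool => σ i = !w)).card := by
    intro w
    apply Finset.card_nbij' (fun σ => Function.update σ i (!w))
      (fun σ => Function.update σ i w)
    · intro σ hσ; simp [Finset.mem_filter]
    · intro σ hσ; simp [Finset.mem_filter]
    · intro σ hσ
      simp only [Finset.mem_coe, Finset.mem_filter, Finset.mem_univ, true_and] at hσ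
      funext j
      by_cases hj : j = i
      · subst hj; simp [hσ]
      · simp [Function.update_of_ne hj]
    · intro σ hσ
      simp only [Finset.mem_coe, Finset.mem_filter, Finset.mem_univ, true_and] at hσ
      funext j
      by_cases hj : j = i
      · subst hj; simp [hσ]
      · simp [Function.update_of_ne hj]
  have hpos : 0 < n := i.pos
  have htot :
      (Finset.univ.filter (fun σ : Fin n → Bool => σ i = v)).card
        + (Finset.univ.filter (fun σ : Fin n → Bool => σ i = !v)).card
        = 2 ^ n := by
    have := Finset.card_filter_add_card_filter_not
      (s := (Finset.univ : Finset (Fin n → Bool)))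
      (p := fun σ => σ i = v)
    have huniv : (Finset.univ : Finset (Fin n → Bool)).card = 2 ^ n := by
      simp [Fintype.card_fun]
    have hneg : (Finset.univ.filter (fun σ : Fin n → Bool => ¬ (σ i = v)))
        = Finset.univ.filter (fun σ : Fin n → Bool => σ i = !v) := by
      apply Finset.filter_congr
      intro σ _
      cases v <;> simp
    rw [hneg, huniv] at this
    exact this
  have h2 : 2 * (Finset.univ.filter (fun σ : Fin n → Bool => σ i = v)).card = 2 ^ n := by
    rw [two_mul]
    nth_rewrite 2 [hswap v]
    exact htot
  have hn : 2 ^ n = 2 * 2 ^ (n - 1) := by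
    conv_lhs => rw [show n = (n - 1) + 1 from (Nat.succ_pred_eq_of_pos hpos).symm]
    ring
  rw [hn] at h2
  exact Nat.eq_of_mul_eq_mul_left (by norm_num) h2

lemma indep_sum {n : ℕ} (A B : Finset (Fin n)) (hdisj : Disjoint A B)
    (F G : (Fin n → Bool) → ℝ)
    (hF : ∀ σ τ : Fin n → Bool, (∀ j ∈ A, σ j = τ j) → F σ = F τ)
    (hG : ∀ σ τ : Fin n → Bool, (∀ j ∈ B, σ j = τ j) → G σ = G τ)
    (i : Fin n) (hiA : i ∈ A) (v : Bool) :
    (2:ℝ) ^ n * ∑ σ ∈ Finset.univ.filter (fun σ : Fin n → Bool => σ i = v), F σ * G σ =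
      (∑ σ ∈ Finset.univ.filter (fun σ : Fin n → Bool => σ i = v), F σ)
        * (∑ σ : Fin n → Bool, G σ) := by
  classical
  set S := Finset.univ.filter (fun σ : Fin n → Bool => σ i = v) with hS
  set merge : (Fin n → Bool) → (Fin n → Bool) → (Fin n → Bool) :=
    fun a b j => if j ∈ A then a j else b j with hmerge
  have hmem : ∀ σ : Fin n → Bool, σ ∈ S ↔ σ i = v := by
    intro σ; simp [hS]
  have hBnotA : ∀ j ∈ B, j ∉ A := fun j hj => (Finset.disjoint_right.mp hdisj) hj
  have key : ∑ p ∈ S ×ˢ (Finset.univ : Finset (Fin n → Bool)), F p.1 * G p.1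
      = ∑ p ∈ S ×ˢ (Finset.univ : Finset (Fin n → Bool)), F p.1 * G p.2 := by
    apply Finset.sum_nbij' (fun p : _ × _ => (merge p.1 p.2, merge p.2 p.1))
      (fun p : _ × _ => (merge p.1 p.2, merge p.2 p.1))
    · rintro ⟨σ, τ⟩ hp
      rw [Finset.mem_product] at hp ⊢
      refine ⟨?_, Finset.mem_univ _⟩
      rw [hmem] at hp ⊢
      simpa [hmerge, hiA] using hp.1
    · rintro ⟨σ, τ⟩ hp
      rw [Finset.mem_product] at hp ⊢
      refine ⟨?_, Finset.mem_univ _⟩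
      rw [hmem] at hp ⊢
      simpa [hmerge, hiA] using hp.1
    · rintro ⟨σ, τ⟩ _
      simp only [Prod.mk.injEq]
      constructor <;> (funext j; by_cases hj : j ∈ A <;> simp [hmerge, hj])
    · rintro ⟨σ, τ⟩ _
      simp only [Prod.mk.injEq]
      constructor <;> (funext j; by_cases hj : j ∈ A <;> simp [hmerge, hj])
    · rintro ⟨σ, τ⟩ _
      have h1 : F σ = F (merge σ τ) := by
        apply hF; intro j hj; simp [hmerge, hj]
      have h2 : G σ = G (merge τ σ) := by
        apply hG; intro j hj; simp [hmerge, hBnotA j hj]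
      simp only
      rw [← h1, ← h2]
  have lhs : ∑ p ∈ S ×ˢ (Finset.univ : Finset (Fin n → Bool)), F p.1 * G p.1
      = (2:ℝ) ^ n * ∑ σ ∈ S, F σ * G σ := by
    rw [Finset.sum_product]
    simp only [Finset.sum_const, nsmul_eq_mul]
    rw [Finset.mul_sum]
    congr 1
    funext σ
    have : ((Finset.univ : Finset (Fin n → Bool)).card : ℝ) = 2 ^ n := by
      simp [Fintype.card_fun]
    rw [this]
  have rhs : ∑ p ∈ S ×ˢ (Finset.univ : Finset (Fin n → Bool)), F p.1 * G p.2
      = (∑ σ ∈ S, F σ) * (∑ σ : Fin n → Bool, G σ) := by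
    rw [Finset.sum_product, Finset.sum_mul]
    congr 1
    funext σ
    rw [Finset.mul_sum]
  rw [← lhs, key, rhs]

theorem stmt_18 {n : ℕ} (f g : (Fin n → Bool) → Bool) (i : Fin n)
    (A B : Finset (Fin n)) (hdisj : Disjoint A B)
    (hfA : ∀ σ τ : Fin n → Bool, (∀ j ∈ A, σ j = τ j) → f σ = f τ)
    (hgB : ∀ σ τ : Fin n → Bool, (∀ j ∈ B, σ j = τ j) → g σ = g τ)
    (hiA : i ∈ A)
    (hle : ∀ σ : Fin n → Bool, f σ ≤ (f σ || g σ)) :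
    effect (fun σ => bval (f σ || g σ)) i =
      mean (fun σ => bval (!g σ)) * effect (fun σ => bval (f σ)) i := by
  classical
  have hpos : 0 < n := i.pos
  have h2n : ((2:ℝ) ^ n) ≠ 0 := by positivity
  have h2n1 : ((2:ℝ) ^ (n - 1)) ≠ 0 := by positivity
  have hsplit : (2:ℝ) ^ n = 2 * 2 ^ (n - 1) := by
    conv_lhs => rw [show n = (n - 1) + 1 from (Nat.succ_pred_eq_of_pos hpos).symm]
    ring
  -- pointwise decomposition
  have hpt : ∀ σ, bval (f σ || g σ) = bval (f σ) + bval (g σ) - bval (f σ) * bval (g σ) := by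
    intro σ; cases hf : f σ <;> cases hg : g σ <;> simp [bval]
  -- independence: cexp of product factors
  have hprod : ∀ v, cexp (fun σ => bval (f σ) * bval (g σ)) i v
      = cexp (fun σ => bval (f σ)) i v * mean (fun σ => bval (g σ)) := by
    intro v
    have := indep_sum A B hdisj (fun σ => bval (f σ)) (fun σ => bval (g σ))
      (fun σ τ h => congrArg bval (hfA σ τ h)) (fun σ τ h => congrArg bval (hgB σ τ h)) i hiA v
    simp only [cexp, mean]
    have hX : (∑ σ ∈ Finset.univ.filter (fun σ : Fin n → Bool => σ i = v),
        bval (f σ) * bval (g σ))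
        = (∑ σ ∈ Finset.univ.filter (fun σ : Fin n → Bool => σ i = v), bval (f σ))
          * (∑ σ : Fin n → Bool, bval (g σ)) / 2 ^ n := by
      rw [eq_div_iff h2n]
      linarith [this]
    rw [hX, div_div, div_mul_div_comm, mul_comm ((2:ℝ) ^ n)]
  -- cexp of g equals mean of g
  have hgconst : ∀ v, cexp (fun σ => bval (g σ)) i v = mean (fun σ => bval (g σ)) := by
    intro v
    have := indep_sum A B hdisj (fun _ => (1:ℝ)) (fun σ => bval (g σ))
      (fun _ _ _ => rfl) (fun σ τ h => congrArg bval (hgB σ τ h)) i hiA v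
    simp only [one_mul, Finset.sum_const, nsmul_eq_mul, mul_one, card_half i v] at this
    push_cast at this
    simp only [cexp, mean]
    rw [div_eq_div_iff h2n1 h2n]
    linarith [this]
  -- linearity of cexp
  have hlin : ∀ v, cexp (fun σ => bval (f σ || g σ)) i v
      = cexp (fun σ => bval (f σ)) i v + cexp (fun σ => bval (g σ)) i v
        - cexp (fun σ => bval (f σ) * bval (g σ)) i v := by
    intro v
    simp only [cexp]
    rw [← add_div, ← sub_div]
    congr 1
    rw [← Finset.sum_add_distrib, ← Finset.sum_sub_distrib]
    exact Finset.sum_congr rfl fun σ _ => hpt σ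
  -- mean of !g
  have hmng : mean (fun σ => bval (!g σ)) = 1 - mean (fun σ => bval (g σ)) := by
    simp only [mean]
    have : ∀ σ : Fin n → Bool, bval (!g σ) = 1 - bval (g σ) := by
      intro σ; cases hg : g σ <;> simp [bval]
    rw [Finset.sum_congr rfl fun σ _ => this σ, Finset.sum_sub_distrib, sub_div]
    congr 1
    simp [Fintype.card_fun, Finset.card_univ]
  rw [effect, hlin true, hlin false, hprod, hprod, hgconst, hgconst, hmng, effect]
  ring
end
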